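/- If Q is a symmetric traceless 3×3 matrix whose smallest eigenvalue q₁ satisfies q₁ ≤ −1/3, then the supremum over symmetric traceless B of B:Q − log∫_{S²} e^{m·Bm} dm is +∞. -/

import Mathlib

/-!
Let `v` be a unit eigenvector of `Q` for an eigenvalue `q ≤ -1/3` and take
`B = -s (v ⊗ v - I/3)`. Then `B:Q = -s q ≥ s/3`, while `m·Bm = s/3 - s⟨v,m⟩²` on the sphere, so
`B:Q - ω(B) ≥ -log ∫ exp(-s⟨v,m⟩²) dm`. The great circle `⟨v,m⟩ = 0` is a null set, hence by
dominated convergence the integral tends to `0` as `s → ∞` and the bound tends to `+∞`.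
-/

open MeasureTheory

noncomputable def sphereMeasure :
    Measure (Metric.sphere (0 : EuclideanSpace ℝ (Fin 3)) 1) :=
  (volume : Measure (EuclideanSpace ℝ (Fin 3))).toSphere

noncomputable def quadForm (B : Matrix (Fin 3) (Fin 3) ℝ)
    (m : EuclideanSpace ℝ (Fin 3)) : ℝ :=
  ∑ i, ∑ j, B i j * m i * m j

noncomputable def omegaFn (B : Matrix (Fin 3) (Fin 3) ℝ) : ℝ :=
  Real.log (∫ m : Metric.sphere (0 : EuclideanSpace ℝ (Fin 3)) 1,
    Real.exp (quadForm B m) ∂sphereMeasure)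

open Filter Topology Matrix

namespace MeasureTheory.Measure

variable {E : Type*} [NormedAddCommGroup E] [NormedSpace ℝ E] [FiniteDimensional ℝ E]
  [MeasurableSpace E] [BorelSpace E]

theorem toSphere_setOf_mem_submodule (μ : Measure E) [μ.IsAddHaarMeasure]
    {S : Submodule ℝ E} (hS : S ≠ ⊤) :
    μ.toSphere {m | (m : E) ∈ S} = 0 := by
  have hmeas : MeasurableSet {m : Metric.sphere (0 : E) 1 | (m : E) ∈ S} :=
    (S.closed_of_finiteDimensional.preimage continuous_subtype_val).measurableSet
  rw [μ.toSphere_apply' hmeas, measure_mono_null _ (addHaar_submodule μ S hS), mul_zero]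
  intro x hx
  obtain ⟨r, -, -, ⟨m, hm, rfl⟩, rfl⟩ := Set.mem_smul.mp hx
  exact S.smul_mem r hm

end MeasureTheory.Measure

theorem ae_toSphere_inner_ne_zero {E : Type*} [NormedAddCommGroup E] [InnerProductSpace ℝ E]
    [FiniteDimensional ℝ E] [MeasurableSpace E] [BorelSpace E]
    (μ : Measure E) [μ.IsAddHaarMeasure] {v : E} (hv : v ≠ 0) :
    ∀ᵐ m : Metric.sphere (0 : E) 1 ∂μ.toSphere, inner ℝ v (m : E) ≠ 0 := by
  have hS : (ℝ ∙ v)ᗮ ≠ ⊤ := fun h ↦ hv <| inner_self_eq_zero.mp <|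
    Submodule.mem_orthogonal_singleton_iff_inner_right.mp (h ▸ Submodule.mem_top)
  simpa [ae_iff, Submodule.mem_orthogonal_singleton_iff_inner_right] using
    μ.toSphere_setOf_mem_submodule hS

theorem tendsto_integral_exp_neg_mul_atTop {α : Type*} [MeasurableSpace α] {μ : Measure α}
    [IsFiniteMeasure μ] {g : α → ℝ} (hg : AEStronglyMeasurable g μ) (hpos : ∀ᵐ x ∂μ, 0 < g x) :
    Tendsto (fun t : ℝ ↦ ∫ x, Real.exp (-(t * g x)) ∂μ) atTop (𝓝 0) := by
  have hlim : ∀ᵐ x ∂μ, Tendsto (fun t : ℝ ↦ Real.exp (-(t * g x))) atTop (𝓝 0) := by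
    filter_upwards [hpos] with x hx
    exact Real.tendsto_exp_neg_atTop_nhds_zero.comp (tendsto_id.atTop_mul_const hx)
  have hbound : ∀ᶠ t : ℝ in atTop, ∀ᵐ x ∂μ, ‖Real.exp (-(t * g x))‖ ≤ 1 := by
    filter_upwards [eventually_ge_atTop 0] with t ht
    filter_upwards [hpos] with x hx
    rw [Real.norm_of_nonneg (Real.exp_nonneg _), Real.exp_le_one_iff, neg_nonpos]
    positivity
  simpa using tendsto_integral_filter_of_dominated_convergence (fun _ ↦ 1)
    (Eventually.of_forall fun t ↦
      Real.continuous_exp.comp_aestronglyMeasurable (hg.const_mul t).neg)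
    hbound (integrable_const 1) hlim

theorem EuclideanSpace.dotProduct_self_eq_norm_sq {ι : Type*} [Fintype ι]
    (v : EuclideanSpace ℝ ι) : v ⬝ᵥ v = ‖v‖ ^ 2 := by
  rw [← real_inner_self_eq_norm_sq, EuclideanSpace.inner_eq_star_dotProduct, star_trivial]

noncomputable def tracelessOuter (v : EuclideanSpace ℝ (Fin 3)) : Matrix (Fin 3) (Fin 3) ℝ :=
  vecMulVec v v - (3 : ℝ)⁻¹ • 1

theorem tracelessOuter_isSymm (v : EuclideanSpace ℝ (Fin 3)) : (tracelessOuter v).IsSymm := by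
  simp [tracelessOuter, IsSymm, transpose_vecMulVec]

theorem trace_tracelessOuter {v : EuclideanSpace ℝ (Fin 3)} (hv : ‖v‖ = 1) :
    (tracelessOuter v).trace = 0 := by
  simp [tracelessOuter, trace_vecMulVec, EuclideanSpace.dotProduct_self_eq_norm_sq, hv]

theorem sum_sum_smul_tracelessOuter_mul (c : ℝ) {v : EuclideanSpace ℝ (Fin 3)} (hv : ‖v‖ = 1)
    {Q : Matrix (Fin 3) (Fin 3) ℝ} {q : ℝ} (hQv : Q *ᵥ v = q • v) (hQ : Q.trace = 0) :
    ∑ i, ∑ j, (c • tracelessOuter v) i j * Q i j = c * q := by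
  have hsum : ∑ i, ∑ j, (c • tracelessOuter v) i j * Q i j
      = c * (v ⬝ᵥ Q *ᵥ v - 3⁻¹ * Q.trace) := by
    simp [tracelessOuter, dotProduct, mulVec, trace, Fin.sum_univ_three, one_apply,
      vecMulVec_apply]
    ring
  rw [hsum, hQv, dotProduct_smul, EuclideanSpace.dotProduct_self_eq_norm_sq, hv, hQ]
  simp

theorem quadForm_eq_dotProduct_mulVec (B : Matrix (Fin 3) (Fin 3) ℝ)
    (m : EuclideanSpace ℝ (Fin 3)) : quadForm B m = m ⬝ᵥ B *ᵥ m := by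
  simp only [quadForm, dotProduct, mulVec, Finset.mul_sum]
  exact Finset.sum_congr rfl fun i _ ↦ Finset.sum_congr rfl fun j _ ↦ by ring

theorem quadForm_smul_tracelessOuter (c : ℝ) (v : EuclideanSpace ℝ (Fin 3))
    {m : EuclideanSpace ℝ (Fin 3)} (hm : ‖m‖ = 1) :
    quadForm (c • tracelessOuter v) m = c * (inner ℝ v m ^ 2 - 3⁻¹) := by
  rw [quadForm_eq_dotProduct_mulVec, EuclideanSpace.inner_eq_star_dotProduct, star_trivial]
  simp only [tracelessOuter, smul_mulVec, sub_mulVec, vecMulVec_mulVec, op_smul_eq_mul,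
    one_mulVec, dotProduct_smul, dotProduct_sub, EuclideanSpace.dotProduct_self_eq_norm_sq, hm,
    smul_eq_mul]
  rw [dotProduct_comm m.ofLp v.ofLp]
  ring

instance : IsFiniteMeasure sphereMeasure := by
  unfold sphereMeasure
  infer_instance

instance : NeZero sphereMeasure := ⟨Measure.toSphere_ne_zero _⟩

theorem integral_exp_sphereMeasure_pos
    {f : Metric.sphere (0 : EuclideanSpace ℝ (Fin 3)) 1 → ℝ} (hf : Continuous f) :
    0 < ∫ m, Real.exp (f m) ∂sphereMeasure :=
  integral_exp_pos <| (Real.continuous_exp.comp hf).integrable_of_hasCompactSupport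
    (HasCompactSupport.of_compactSpace _)

theorem omegaFn_neg_smul_tracelessOuter (s : ℝ) (v : EuclideanSpace ℝ (Fin 3)) :
    omegaFn ((-s) • tracelessOuter v) = s / 3 + Real.log
      (∫ m : Metric.sphere (0 : EuclideanSpace ℝ (Fin 3)) 1,
        Real.exp (-(s * inner ℝ v (m : EuclideanSpace ℝ (Fin 3)) ^ 2)) ∂sphereMeasure) := by
  have hexp : ∀ m : Metric.sphere (0 : EuclideanSpace ℝ (Fin 3)) 1,
      Real.exp (quadForm ((-s) • tracelessOuter v) m)
        = Real.exp (s / 3) * Real.exp (-(s * inner ℝ v (m : EuclideanSpace ℝ (Fin 3)) ^ 2)) := by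
    intro m
    rw [quadForm_smul_tracelessOuter _ _ (norm_eq_of_mem_sphere m), ← Real.exp_add]
    ring_nf
  rw [omegaFn, integral_congr_ae (ae_of_all _ hexp), integral_const_mul,
    Real.log_mul (Real.exp_pos _).ne' (integral_exp_sphereMeasure_pos (by fun_prop)).ne',
    Real.log_exp]

theorem sup_legendre_infinite (Q : Matrix (Fin 3) (Fin 3) ℝ)
    (hQ : Q.IsHermitian) (htr : Q.trace = 0)
    (heig : ∃ i, hQ.eigenvalues i ≤ -(1 / 3)) :
    ∀ C : ℝ, ∃ B : Matrix (Fin 3) (Fin 3) ℝ, B.IsSymm ∧ B.trace = 0 ∧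
      C < (∑ i, ∑ j, B i j * Q i j) - omegaFn B := by
  intro C
  obtain ⟨i, hq⟩ := heig
  set v := hQ.eigenvectorBasis i
  have hv : ‖v‖ = 1 := hQ.eigenvectorBasis.orthonormal.1 i
  have hlim := tendsto_integral_exp_neg_mul_atTop (μ := sphereMeasure)
    (g := fun m ↦ inner ℝ v (m : EuclideanSpace ℝ (Fin 3)) ^ 2) (by fun_prop) <| by
      filter_upwards [ae_toSphere_inner_ne_zero volume (norm_ne_zero_iff.mp (hv ▸ one_ne_zero))]
        with m hm
      positivity
  obtain ⟨s, hsmall, hs⟩ :=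
    ((hlim.eventually (gt_mem_nhds (Real.exp_pos (-C)))).and (eventually_ge_atTop 0)).exists
  refine ⟨(-s) • tracelessOuter v, (tracelessOuter_isSymm v).smul _,
    by rw [trace_smul, trace_tracelessOuter hv, smul_zero], ?_⟩
  rw [sum_sum_smul_tracelessOuter_mul _ hv (hQ.mulVec_eigenvectorBasis i) htr,
    omegaFn_neg_smul_tracelessOuter]
  have hlog := (Real.log_lt_iff_lt_exp (integral_exp_sphereMeasure_pos (by fun_prop))).mpr hsmall
  linarith [mul_le_mul_of_nonneg_left hq hs]
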